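/- With notation as in the QuickSort decomposition lemma, let Q_s denote the random output ranking of QuickSort and for X: V×V → ℝ define α[Q_s,X]_{uv} = Q_s(u,v)X(v,u) + Q_s(v,u)X(u,v), α[h,X]_{uv} = h(u,v)X(v,u) + h(v,u)X(u,v), and β[X]_{uvw} = (1/3)[h(u,v)h(v,w)X(w,u) + h(w,v)h(v,u)X(u,w) + h(v,u)h(u,w)X(w,v) + h(w,u)h(u,v)X(v,w) + h(u,w)h(w,v)X(v,u) + h(v,w)h(w,u)X(u,v)]. Then E_s[Σ_{u<v} α[Q_s,X]_{uv}] = Σ_{u<v} p_{uv}·α[h,X]_{uv} + Σ_{u<v<w} p_{uvw}·β[X]_{uvw}. -/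

import Mathlib

/-!
Fix `u ≠ v`. Along the recursion of QuickSort the two elements stay in one call until the
first pivot `w` that separates them, and this pivot fixes their order in the output: if
`w ∈ {u, v}` the pair is compared directly and ordered by `h`, otherwise `u` precedes `v` iff
`h(u,w) = h(w,v) = 1`. An earlier pivot `w` of a call containing both sends them to the same
side, and then `h(u,w) h(w,v) = 0` because `h` is a tournament. Hence, for every input order,
the indicator of "`u` before `v`" equals `[uv direct] h(u,v) + Σ_w [w is a pivot of a call
containing u, v] h(u,w) h(w,v)`. Taking expectations and grouping the pivot terms by triples
leaves the fact that each element of a triple `{a, b, c}` is equally likely to be the pivot of a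
call containing the other two: relabelling the uniformly random input by a transposition
exchanges these events, so each has probability `p_{abc} / 3`.
-/

variable {V : Type*} [DecidableEq V]

/-- QuickSort on a list using a (possibly non-transitive) preference function:
the head is the pivot, elements preferred to the pivot go left.  Running it on
a uniformly random permutation of the input is equivalent to uniformly random
pivot selection. -/
def qsort (h : V → V → Bool) : List V → List V
  | [] => []
  | x :: xs =>
      qsort h (xs.filter (fun y => h y x)) ++ x :: qsort h (xs.filter (fun y => !(h y x)))
  termination_by l => l.length
  decreasing_by
    · simp only [List.length_cons, List.length_unattach]; exact Nat.lt_succ_of_le ((List.length_filter_le _ _).trans (le_of_eq List.length_attach))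
    · simp only [List.length_cons, List.length_unattach]; exact Nat.lt_succ_of_le ((List.length_filter_le _ _).trans (le_of_eq List.length_attach))

/-- The unordered pairs compared directly (pivot vs. element of its call). -/
def directPairs (h : V → V → Bool) : List V → List (Finset V)
  | [] => []
  | x :: xs =>
      xs.map (fun y => ({x, y} : Finset V)) ++
      (directPairs h (xs.filter (fun y => h y x)) ++
        directPairs h (xs.filter (fun y => !(h y x))))
  termination_by l => l.length
  decreasing_by
    · simp only [List.length_cons, List.length_unattach]; exact Nat.lt_succ_of_le ((List.length_filter_le _ _).trans (le_of_eq List.length_attach))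
    · simp only [List.length_cons, List.length_unattach]; exact Nat.lt_succ_of_le ((List.length_filter_le _ _).trans (le_of_eq List.length_attach))

/-- The unordered triples present together in a recursive call whose pivot is
one of them. -/
def pivotTriples (h : V → V → Bool) : List V → List (Finset V)
  | [] => []
  | x :: xs =>
      (xs.product xs).map (fun p => ({x, p.1, p.2} : Finset V)) ++
      (pivotTriples h (xs.filter (fun y => h y x)) ++
        pivotTriples h (xs.filter (fun y => !(h y x))))
  termination_by l => l.length
  decreasing_by
    · simp only [List.length_cons, List.length_unattach]; exact Nat.lt_succ_of_le ((List.length_filter_le _ _).trans (le_of_eq List.length_attach))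
    · simp only [List.length_cons, List.length_unattach]; exact Nat.lt_succ_of_le ((List.length_filter_le _ _).trans (le_of_eq List.length_attach))

/-- Expectation of `f` of the input list over a uniformly random ordering of
`V` (equivalently, over the random bits of QuickSort's pivot choices). -/
noncomputable def qsExp [Fintype V] (f : List V → ℝ) : ℝ :=
  (((Finset.univ : Finset V).toList.permutations.map f).sum) /
    (Nat.factorial (Fintype.card V))

/-- p_{uv}: the probability that the pair {u,v} is compared directly. -/
noncomputable def pPair [Fintype V] (h : V → V → Bool) (u v : V) : ℝ :=
  qsExp (fun l => if ({u, v} : Finset V) ∈ directPairs h l then 1 else 0)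

/-- p_{uvw}: the probability that u, v, w are in the same recursive call when
one of them is first chosen as pivot. -/
noncomputable def pTriple [Fintype V] (h : V → V → Bool) (u v w : V) : ℝ :=
  qsExp (fun l => if ({u, v, w} : Finset V) ∈ pivotTriples h l then 1 else 0)

/-- The {0,1}-valued preference function as a real number. -/
def hr (h : V → V → Bool) (a b : V) : ℝ := if h a b then 1 else 0

/-- Indicator that `u` is ranked before `v` in the output list. -/
def rankBefore (l : List V) (u v : V) : ℝ := if l.idxOf u < l.idxOf v then 1 else 0

theorem qsort_induction {α : Type*} (h : α → α → Bool) {motive : List α → Prop}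
    (nil : motive [])
    (cons : ∀ x xs, motive (xs.filter (fun y => h y x)) →
      motive (xs.filter (fun y => !(h y x))) → motive (x :: xs)) :
    ∀ l, motive l
  | [] => nil
  | x :: xs => cons x xs (qsort_induction h nil cons _) (qsort_induction h nil cons _)
termination_by l => l.length
decreasing_by all_goals exact Nat.lt_succ_of_le (List.length_filter_le _ _)

theorem qsort_cons {α : Type*} (h : α → α → Bool) (x : α) (xs : List α) :
    qsort h (x :: xs) =
      qsort h (xs.filter (fun y => h y x)) ++ x :: qsort h (xs.filter (fun y => !(h y x))) := by
  rw [qsort]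

theorem qsort_perm {α : Type*} (h : α → α → Bool) (l : List α) : (qsort h l).Perm l := by
  induction l using qsort_induction h with
  | nil => rw [qsort]
  | cons x xs ihL ihR =>
    rw [qsort_cons]
    exact ((ihL.append (ihR.cons x)).trans List.perm_middle).trans
      ((List.filter_append_perm _ xs).cons x)

theorem mem_qsort {α : Type*} {h : α → α → Bool} {a : α} {l : List α} :
    a ∈ qsort h l ↔ a ∈ l :=
  (qsort_perm h l).mem_iff

section RankBefore

variable {l l' : List V} {u v x : V}

theorem rankBefore_append_of_mem (hu : u ∈ l) (hv : v ∈ l) :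
    rankBefore (l ++ l') u v = rankBefore l u v := by
  simp only [rankBefore, List.idxOf_append_of_mem hu, List.idxOf_append_of_mem hv]

theorem rankBefore_append_of_notMem (hu : u ∉ l) (hv : v ∉ l) :
    rankBefore (l ++ l') u v = rankBefore l' u v := by
  simp only [rankBefore, List.idxOf_append_of_notMem hu, List.idxOf_append_of_notMem hv,
    Nat.add_lt_add_iff_left]

theorem rankBefore_append_of_mem_of_notMem (hu : u ∈ l) (hv : v ∉ l) :
    rankBefore (l ++ l') u v = 1 := by
  have := List.idxOf_lt_length_iff.mpr hu
  rw [rankBefore, List.idxOf_append_of_mem hu, List.idxOf_append_of_notMem hv, if_pos (by omega)]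

theorem rankBefore_append_of_notMem_of_mem (hu : u ∉ l) (hv : v ∈ l) :
    rankBefore (l ++ l') u v = 0 := by
  have := List.idxOf_lt_length_iff.mpr hv
  rw [rankBefore, List.idxOf_append_of_mem hv, List.idxOf_append_of_notMem hu, if_neg (by omega)]

theorem rankBefore_cons_of_ne (hu : u ≠ x) (hv : v ≠ x) :
    rankBefore (x :: l) u v = rankBefore l u v := by
  simp only [rankBefore, List.idxOf_cons_ne _ hu.symm, List.idxOf_cons_ne _ hv.symm,
    Nat.succ_lt_succ_iff]

theorem rankBefore_cons_self_left (hv : v ≠ x) : rankBefore (x :: l) x v = 1 := by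
  simp [rankBefore, List.idxOf_cons_ne _ hv.symm]

theorem rankBefore_cons_self_right : rankBefore (x :: l) u x = 0 := by
  simp [rankBefore]

end RankBefore

theorem notMem_filter_not_of_mem_filter {α : Type*} {p : α → Bool} {y : α} {xs : List α}
    (hy : y ∈ xs.filter p) : y ∉ xs.filter (fun y => !(p y)) := by
  simp_all [List.mem_filter]

theorem ne_of_nodup_cons_of_mem_filter {α : Type*} {p : α → Bool} {x y : α} {xs : List α}
    (hl : (x :: xs).Nodup) (hy : y ∈ xs.filter p) : x ≠ y :=
  fun e => (List.nodup_cons.mp hl).1 (e ▸ List.mem_of_mem_filter hy)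

theorem filter_map_swap {a b : V} {p : V → Bool} (hab : p a = p b) (xs : List V) :
    (xs.map (Equiv.swap a b)).filter p = (xs.filter p).map (Equiv.swap a b) := by
  rw [List.filter_map]
  congr 1
  refine List.filter_congr fun y _ => ?_
  rcases eq_or_ne y a with rfl | hya
  · simp [hab]
  rcases eq_or_ne y b with rfl | hyb
  · simp [hab]
  simp [Equiv.swap_apply_of_ne_of_ne hya hyb]

/-- The paper's event that `w` is chosen as pivot while `u` and `v` are still in its call. -/
inductive PivotFor {α : Type*} (h : α → α → Bool) (w u v : α) : List α → Prop
  | here {xs : List α} : u ∈ xs → v ∈ xs → PivotFor h w u v (w :: xs)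
  | left {x : α} {xs : List α} :
      PivotFor h w u v (xs.filter (fun y => h y x)) → PivotFor h w u v (x :: xs)
  | right {x : α} {xs : List α} :
      PivotFor h w u v (xs.filter (fun y => !(h y x))) → PivotFor h w u v (x :: xs)

namespace PivotFor

variable {α : Type*} {h : α → α → Bool} {w u v : α} {l : List α}

theorem not_nil : ¬ PivotFor h w u v [] :=
  nofun

theorem cons_iff {x : α} {xs : List α} :
    PivotFor h w u v (x :: xs) ↔ (x = w ∧ u ∈ xs ∧ v ∈ xs) ∨
      PivotFor h w u v (xs.filter (fun y => h y x)) ∨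
      PivotFor h w u v (xs.filter (fun y => !(h y x))) := by
  constructor
  · rintro (⟨hu, hv⟩ | hp | hp)
    exacts [Or.inl ⟨rfl, hu, hv⟩, Or.inr (Or.inl hp), Or.inr (Or.inr hp)]
  · rintro (⟨rfl, hu, hv⟩ | hp | hp)
    exacts [here hu hv, left hp, right hp]

theorem mem (hp : PivotFor h w u v l) : w ∈ l ∧ u ∈ l ∧ v ∈ l := by
  induction hp with
  | here hu hv => exact ⟨List.mem_cons_self, List.mem_cons_of_mem _ hu, List.mem_cons_of_mem _ hv⟩
  | left _ ih | right _ ih =>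
    obtain ⟨hw, hu, hv⟩ := ih
    exact ⟨List.mem_cons_of_mem _ (List.mem_of_mem_filter hw),
      List.mem_cons_of_mem _ (List.mem_of_mem_filter hu),
      List.mem_cons_of_mem _ (List.mem_of_mem_filter hv)⟩

theorem symm (hp : PivotFor h w u v l) : PivotFor h w v u l := by
  induction hp with
  | here hu hv => exact here hv hu
  | left _ ih => exact left ih
  | right _ ih => exact right ih

theorem comm_iff : PivotFor h w u v l ↔ PivotFor h w v u l :=
  ⟨symm, symm⟩

/-- Of two elements, the one chosen as pivot first leaves the call of the other. -/
theorem antisymm {p q y y' : α} (hl : l.Nodup) (hpq : PivotFor h p q y l)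
    (hqp : PivotFor h q p y' l) : p = q := by
  induction hpq with
  | here _ _ =>
    rcases cons_iff.mp hqp with ⟨rfl, -⟩ | hp | hp
    · rfl
    all_goals exact absurd (List.mem_of_mem_filter hp.mem.2.1) (List.nodup_cons.mp hl).1
  | left hp ih =>
    have hqL := hp.mem.2.1
    rcases cons_iff.mp hqp with ⟨rfl, -⟩ | hq | hq
    · exact absurd (List.mem_of_mem_filter hqL) (List.nodup_cons.mp hl).1
    · exact ih ((List.nodup_cons.mp hl).2.filter _) hq
    · exact absurd hq.mem.1 (notMem_filter_not_of_mem_filter hqL)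
  | right hp ih =>
    have hqR := hp.mem.2.1
    rcases cons_iff.mp hqp with ⟨rfl, -⟩ | hq | hq
    · exact absurd (List.mem_of_mem_filter hqR) (List.nodup_cons.mp hl).1
    · exact absurd hqR (notMem_filter_not_of_mem_filter hq.mem.1)
    · exact ih ((List.nodup_cons.mp hl).2.filter _) hq

end PivotFor

theorem PivotFor.map_swap {h : V → V → Bool} {a b c : V} {l : List V} (hl : l.Nodup)
    (hca : c ≠ a) (hcb : c ≠ b) (hp : PivotFor h a b c l) :
    PivotFor h b a c (l.map (Equiv.swap a b)) := by
  induction hp with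
  | here hb hc =>
    rw [List.map_cons, Equiv.swap_apply_left]
    exact .here (List.mem_map.mpr ⟨b, hb, Equiv.swap_apply_right a b⟩)
      (List.mem_map.mpr ⟨c, hc, Equiv.swap_apply_of_ne_of_ne hca hcb⟩)
  | @left x xs hp ih =>
    obtain ⟨ha, hb, -⟩ := hp.mem
    rw [List.map_cons, Equiv.swap_apply_of_ne_of_ne (ne_of_nodup_cons_of_mem_filter hl ha)
      (ne_of_nodup_cons_of_mem_filter hl hb)]
    refine .left ?_
    rw [filter_map_swap (p := fun y => h y x) (by simp_all [List.mem_filter])]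
    exact ih ((List.nodup_cons.mp hl).2.filter _)
  | @right x xs hp ih =>
    obtain ⟨ha, hb, -⟩ := hp.mem
    rw [List.map_cons, Equiv.swap_apply_of_ne_of_ne (ne_of_nodup_cons_of_mem_filter hl ha)
      (ne_of_nodup_cons_of_mem_filter hl hb)]
    refine .right ?_
    rw [filter_map_swap (p := fun y => !(h y x)) (by simp_all [List.mem_filter])]
    exact ih ((List.nodup_cons.mp hl).2.filter _)

theorem PivotFor.map_swap_iff {h : V → V → Bool} {a b c : V} {l : List V} (hl : l.Nodup)
    (hca : c ≠ a) (hcb : c ≠ b) :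
    PivotFor h b a c (l.map (Equiv.swap a b)) ↔ PivotFor h a b c l := by
  refine ⟨fun hp => ?_, PivotFor.map_swap hl hca hcb⟩
  have := hp.map_swap (hl.map (Equiv.swap a b).injective) hcb hca
  rwa [List.map_map, Equiv.swap_comm, ← Equiv.coe_trans, Equiv.swap_swap, Equiv.coe_refl,
    List.map_id] at this

theorem exists_mem_pair_eq_iff {x u v : V} {xs : List V} :
    (∃ y ∈ xs, ({x, y} : Finset V) = {u, v}) ↔ (x = u ∧ v ∈ xs) ∨ (x = v ∧ u ∈ xs) := by
  simp only [← Finset.coe_inj, Finset.coe_pair, Set.pair_eq_pair_iff]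
  constructor
  · rintro ⟨y, hy, ⟨rfl, rfl⟩ | ⟨rfl, rfl⟩⟩
    exacts [Or.inl ⟨rfl, hy⟩, Or.inr ⟨rfl, hy⟩]
  · rintro (⟨rfl, hv⟩ | ⟨rfl, hu⟩)
    exacts [⟨v, hv, Or.inl ⟨rfl, rfl⟩⟩, ⟨u, hu, Or.inr ⟨rfl, rfl⟩⟩]

theorem exists_mem_product_triple_eq_iff {x u v w : V} {xs : List V} (huv : u ≠ v)
    (huw : u ≠ w) (hvw : v ≠ w) :
    (∃ p ∈ xs.product xs, ({x, p.1, p.2} : Finset V) = {u, v, w}) ↔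
      (x = u ∧ v ∈ xs ∧ w ∈ xs) ∨ (x = v ∧ u ∈ xs ∧ w ∈ xs) ∨ (x = w ∧ u ∈ xs ∧ v ∈ xs) := by
  constructor
  · rintro ⟨⟨a, b⟩, hab, he⟩
    rw [List.pair_mem_product] at hab
    have hmem : ∀ z ∈ ({u, v, w} : Finset V), z = x ∨ z ∈ xs := by
      intro z hz
      rw [← he] at hz
      simp only [Finset.mem_insert, Finset.mem_singleton] at hz
      rcases hz with rfl | rfl | rfl
      exacts [Or.inl rfl, Or.inr hab.1, Or.inr hab.2]
    have hx : x ∈ ({u, v, w} : Finset V) := he ▸ Finset.mem_insert_self _ _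
    simp only [Finset.mem_insert, Finset.mem_singleton] at hx hmem
    rcases hx with rfl | rfl | rfl
    · exact Or.inl ⟨rfl, (hmem v (by simp)).resolve_left huv.symm,
        (hmem w (by simp)).resolve_left huw.symm⟩
    · exact Or.inr (Or.inl ⟨rfl, (hmem u (by simp)).resolve_left huv,
        (hmem w (by simp)).resolve_left hvw.symm⟩)
    · exact Or.inr (Or.inr ⟨rfl, (hmem u (by simp)).resolve_left huw,
        (hmem v (by simp)).resolve_left hvw⟩)
  · rintro (⟨rfl, hv, hw⟩ | ⟨rfl, hu, hw⟩ | ⟨rfl, hu, hv⟩)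
    · exact ⟨(v, w), List.pair_mem_product.mpr ⟨hv, hw⟩, rfl⟩
    · exact ⟨(u, w), List.pair_mem_product.mpr ⟨hu, hw⟩, Finset.insert_comm _ _ _⟩
    · refine ⟨(u, v), List.pair_mem_product.mpr ⟨hu, hv⟩, ?_⟩
      rw [Finset.insert_comm x u, Finset.pair_comm x v]

theorem mem_directPairs_iff (h : V → V → Bool) (u v : V) (l : List V) :
    ({u, v} : Finset V) ∈ directPairs h l ↔ PivotFor h u v v l ∨ PivotFor h v u u l := by
  induction l using qsort_induction h with
  | nil => simp [directPairs, PivotFor.not_nil]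
  | cons x xs ihL ihR =>
    rw [directPairs, List.mem_append, List.mem_append, List.mem_map, ihL, ihR,
      PivotFor.cons_iff, PivotFor.cons_iff, exists_mem_pair_eq_iff]
    simp only [and_self, or_assoc, or_left_comm]

theorem mem_of_mem_directPairs {h : V → V → Bool} {u v : V} {l : List V}
    (huv : ({u, v} : Finset V) ∈ directPairs h l) : u ∈ l ∧ v ∈ l := by
  rcases (mem_directPairs_iff h u v l).mp huv with hp | hp
  exacts [⟨hp.mem.1, hp.mem.2.1⟩, ⟨hp.mem.2.1, hp.mem.1⟩]

theorem mem_pivotTriples_iff (h : V → V → Bool) {u v w : V} (huv : u ≠ v) (huw : u ≠ w)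
    (hvw : v ≠ w) (l : List V) :
    ({u, v, w} : Finset V) ∈ pivotTriples h l ↔
      PivotFor h u v w l ∨ PivotFor h v u w l ∨ PivotFor h w u v l := by
  induction l using qsort_induction h with
  | nil => simp [pivotTriples, PivotFor.not_nil]
  | cons x xs ihL ihR =>
    rw [pivotTriples, List.mem_append, List.mem_append, List.mem_map, ihL, ihR,
      PivotFor.cons_iff, PivotFor.cons_iff, PivotFor.cons_iff,
      exists_mem_product_triple_eq_iff huv huw hvw]
    simp only [or_assoc, or_left_comm]

theorem ite_or_eq_add {P Q : Prop} [Decidable P] [Decidable Q] (hPQ : ¬(P ∧ Q)) :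
    (if P ∨ Q then (1 : ℝ) else 0) = (if P then 1 else 0) + (if Q then 1 else 0) := by
  by_cases hP : P <;> by_cases hQ : Q <;> simp_all

section PivotRank

open scoped Classical

variable [Fintype V]

noncomputable def pivotRank (h : V → V → Bool) (u v : V) (l : List V) : ℝ :=
  (if ({u, v} : Finset V) ∈ directPairs h l then 1 else 0) * hr h u v +
    ∑ w ∈ Finset.univ.filter (fun w => w ≠ u ∧ w ≠ v),
      (if PivotFor h w u v l then 1 else 0) * (hr h u w * hr h w v)

variable {h : V → V → Bool} {u v x : V} {xs : List V}

theorem pivotRank_eq_zero {l : List V} (huv : ¬(u ∈ l ∧ v ∈ l)) : pivotRank h u v l = 0 := by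
  have hpt : ∀ w, ¬ PivotFor h w u v l := fun w hp => huv hp.mem.2
  have hdir : ({u, v} : Finset V) ∉ directPairs h l := fun hd => huv (mem_of_mem_directPairs hd)
  simp [pivotRank, hpt, hdir]

theorem pivotRank_cons_of_ne (hx : x ∉ xs) (hxu : x ≠ u) (hxv : x ≠ v) :
    pivotRank h u v (x :: xs) =
      pivotRank h u v (xs.filter (fun y => h y x)) +
        pivotRank h u v (xs.filter (fun y => !(h y x))) +
        if u ∈ xs ∧ v ∈ xs then hr h u x * hr h x v else 0 := by
  have hdir : (if ({u, v} : Finset V) ∈ directPairs h (x :: xs) then (1 : ℝ) else 0) =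
      (if ({u, v} : Finset V) ∈ directPairs h (xs.filter (fun y => h y x)) then 1 else 0) +
        (if ({u, v} : Finset V) ∈ directPairs h (xs.filter (fun y => !(h y x))) then 1 else 0) := by
    rw [← ite_or_eq_add fun hLR => notMem_filter_not_of_mem_filter
      (mem_of_mem_directPairs hLR.1).1 (mem_of_mem_directPairs hLR.2).1]
    refine if_congr ?_ rfl rfl
    simp only [mem_directPairs_iff, PivotFor.cons_iff, hxu, hxv, false_and, false_or]
    tauto
  have hpt : ∀ w, (if PivotFor h w u v (x :: xs) then (1 : ℝ) else 0) =
      (if x = w ∧ u ∈ xs ∧ v ∈ xs then 1 else 0) +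
        (if PivotFor h w u v (xs.filter (fun y => h y x)) then 1 else 0) +
        (if PivotFor h w u v (xs.filter (fun y => !(h y x))) then 1 else 0) := by
    intro w
    rw [if_congr PivotFor.cons_iff rfl rfl, ite_or_eq_add, ite_or_eq_add, add_assoc]
    · exact fun hLR => notMem_filter_not_of_mem_filter hLR.1.mem.2.1 hLR.2.mem.2.1
    · rintro ⟨⟨rfl, -⟩, hp | hp⟩ <;> exact hx (List.mem_of_mem_filter hp.mem.1)
  have hroot : ∑ w ∈ Finset.univ.filter (fun w => w ≠ u ∧ w ≠ v),
      (if x = w ∧ u ∈ xs ∧ v ∈ xs then (1 : ℝ) else 0) * (hr h u w * hr h w v) =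
        if u ∈ xs ∧ v ∈ xs then hr h u x * hr h x v else 0 := by
    rw [Finset.sum_eq_single_of_mem x (by simp [hxu, hxv]) fun w _ hwx => by simp [Ne.symm hwx]]
    split_ifs <;> simp_all
  simp only [pivotRank, hdir, hpt, add_mul, Finset.sum_add_distrib, hroot]
  ring

theorem pivotRank_cons_of_eq_or_eq (hx : x ∉ xs) (huv : u ≠ v) (hxuv : x = u ∨ x = v)
    (hu : u ∈ x :: xs) (hv : v ∈ x :: xs) : pivotRank h u v (x :: xs) = hr h u v := by
  have hdir : ({u, v} : Finset V) ∈ directPairs h (x :: xs) := by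
    rw [mem_directPairs_iff]
    rcases hxuv with rfl | rfl
    · have hv' := (List.mem_cons.mp hv).resolve_left huv.symm
      exact Or.inl (.here hv' hv')
    · have hu' := (List.mem_cons.mp hu).resolve_left huv
      exact Or.inr (.here hu' hu')
  have hpt : ∀ w ∈ Finset.univ.filter (fun w => w ≠ u ∧ w ≠ v),
      ¬ PivotFor h w u v (x :: xs) := by
    intro w hw hp
    obtain ⟨hwu, hwv⟩ := (Finset.mem_filter.mp hw).2
    have hx' : x ∉ xs.filter (fun y => h y x) ∧ x ∉ xs.filter (fun y => !(h y x)) :=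
      ⟨fun hm => hx (List.mem_of_mem_filter hm), fun hm => hx (List.mem_of_mem_filter hm)⟩
    rcases PivotFor.cons_iff.mp hp with ⟨rfl, -⟩ | hp | hp <;> rcases hxuv with rfl | rfl
    exacts [hwu rfl, hwv rfl, hx'.1 hp.mem.2.1, hx'.1 hp.mem.2.2, hx'.2 hp.mem.2.1,
      hx'.2 hp.mem.2.2]
  rw [pivotRank, if_pos hdir, one_mul,
    Finset.sum_eq_zero fun w hw => by rw [if_neg (hpt w hw), zero_mul], add_zero]

end PivotRank

section Ranking

variable {h : V → V → Bool} {u v x : V} {xs : List V}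

theorem rankBefore_qsort_cons_of_eq_or_eq (htour : ∀ a b, a ≠ b → h a b = !h b a)
    (hx : x ∉ xs) (huv : u ≠ v) (hxuv : x = u ∨ x = v) (hu : u ∈ x :: xs) (hv : v ∈ x :: xs) :
    rankBefore (qsort h (x :: xs)) u v = hr h u v := by
  have hxL : x ∉ qsort h (xs.filter (fun y => h y x)) :=
    fun hm => hx (List.mem_of_mem_filter (mem_qsort.mp hm))
  rw [qsort_cons]
  rcases hxuv with rfl | rfl
  · have hv' := (List.mem_cons.mp hv).resolve_left huv.symm
    cases hvx : h v x
    · rw [rankBefore_append_of_notMem hxL (by simp [mem_qsort, hvx]),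
        rankBefore_cons_self_left (Ne.symm huv)]
      simp [hr, htour x v huv, hvx]
    · rw [rankBefore_append_of_notMem_of_mem hxL (by simp [mem_qsort, hvx, hv'])]
      simp [hr, htour x v huv, hvx]
  · have hu' := (List.mem_cons.mp hu).resolve_left huv
    cases hux : h u x
    · rw [rankBefore_append_of_notMem (by simp [mem_qsort, hux]) hxL, rankBefore_cons_self_right]
      simp [hr, hux]
    · rw [rankBefore_append_of_mem_of_notMem (by simp [mem_qsort, hux, hu']) hxL]
      simp [hr, hux]

variable [Fintype V]

theorem rankBefore_qsort_eq_pivotRank (htour : ∀ a b, a ≠ b → h a b = !h b a) {l : List V}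
    (hl : l.Nodup) (huv : u ≠ v) (hu : u ∈ l) (hv : v ∈ l) :
    rankBefore (qsort h l) u v = pivotRank h u v l := by
  induction l using qsort_induction h generalizing u v with
  | nil => simp at hu
  | cons x xs ihL ihR =>
    obtain ⟨hx, hxs⟩ := List.nodup_cons.mp hl
    by_cases hxuv : x = u ∨ x = v
    · rw [rankBefore_qsort_cons_of_eq_or_eq htour hx huv hxuv hu hv,
        pivotRank_cons_of_eq_or_eq hx huv hxuv hu hv]
    obtain ⟨hxu, hxv⟩ := not_or.mp hxuv
    have hu' := (List.mem_cons.mp hu).resolve_left (Ne.symm hxu)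
    have hv' := (List.mem_cons.mp hv).resolve_left (Ne.symm hxv)
    rw [qsort_cons, pivotRank_cons_of_ne hx hxu hxv, if_pos ⟨hu', hv'⟩]
    cases hux : h u x <;> cases hvx : h v x
    · rw [rankBefore_append_of_notMem (by simp [mem_qsort, hux]) (by simp [mem_qsort, hvx]),
        rankBefore_cons_of_ne (Ne.symm hxu) (Ne.symm hxv),
        ihR (hxs.filter _) huv (by simp [hux, hu']) (by simp [hvx, hv']),
        pivotRank_eq_zero (l := xs.filter (fun y => h y x)) (by simp [hux])]
      simp [hr, hux]
    · rw [rankBefore_append_of_notMem_of_mem (by simp [mem_qsort, hux])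
        (by simp [mem_qsort, hvx, hv']), pivotRank_eq_zero (by simp [hux]),
        pivotRank_eq_zero (by simp [hvx])]
      simp [hr, hux]
    · rw [rankBefore_append_of_mem_of_notMem (by simp [mem_qsort, hux, hu'])
        (by simp [mem_qsort, hvx]), pivotRank_eq_zero (by simp [hvx]),
        pivotRank_eq_zero (by simp [hux])]
      simp [hr, hux, htour x v hxv, hvx]
    · rw [rankBefore_append_of_mem (by simp [mem_qsort, hux, hu']) (by simp [mem_qsort, hvx, hv']),
        ihL (hxs.filter _) huv (by simp [hux, hu']) (by simp [hvx, hv']),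
        pivotRank_eq_zero (l := xs.filter (fun y => !(h y x))) (by simp [hux])]
      simp [hr, htour x v hxv, hvx]

end Ranking

theorem mem_permutations_toList_univ {α : Type*} [Fintype α] {l : List α} :
    l ∈ (Finset.univ : Finset α).toList.permutations ↔ l.Nodup ∧ ∀ a, a ∈ l := by
  rw [List.mem_permutations]
  refine ⟨fun hp => ⟨hp.nodup_iff.mpr (Finset.nodup_toList _), fun a => hp.mem_iff.mpr (by simp)⟩,
    fun ⟨hl, hall⟩ => ?_⟩
  rw [List.perm_ext_iff_of_nodup hl (Finset.nodup_toList _)]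
  simp [hall]

section Expectation

variable [Fintype V]

theorem qsExp_eq_sum (f : List V → ℝ) :
    qsExp f = (∑ l ∈ (Finset.univ : Finset V).toList.permutations.toFinset, f l) /
      (Fintype.card V).factorial := by
  rw [qsExp, List.sum_toFinset _ (List.nodup_permutations _ (Finset.nodup_toList _))]

theorem qsExp_add (f g : List V → ℝ) : qsExp (fun l => f l + g l) = qsExp f + qsExp g := by
  simp only [qsExp_eq_sum, Finset.sum_add_distrib, add_div]

theorem qsExp_mul_const (f : List V → ℝ) (c : ℝ) : qsExp (fun l => f l * c) = qsExp f * c := by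
  simp only [qsExp_eq_sum, ← Finset.sum_mul, div_mul_eq_mul_div]

theorem qsExp_sum {ι : Type*} (s : Finset ι) (f : ι → List V → ℝ) :
    qsExp (fun l => ∑ i ∈ s, f i l) = ∑ i ∈ s, qsExp (f i) := by
  simp only [qsExp_eq_sum, Finset.sum_comm (s := s), Finset.sum_div]

theorem qsExp_congr {f g : List V → ℝ} (hfg : ∀ l : List V, l.Nodup → (∀ a, a ∈ l) → f l = g l) :
    qsExp f = qsExp g := by
  simp only [qsExp_eq_sum]
  congr 1
  refine Finset.sum_congr rfl fun l hl => ?_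
  rw [List.mem_toFinset, mem_permutations_toList_univ] at hl
  exact hfg l hl.1 hl.2

theorem qsExp_comp_map (σ : Equiv.Perm V) (f : List V → ℝ) :
    qsExp (fun l => f (l.map σ)) = qsExp f := by
  have hmem : ∀ (τ : Equiv.Perm V) {l : List V},
      l ∈ (Finset.univ : Finset V).toList.permutations.toFinset →
        l.map τ ∈ (Finset.univ : Finset V).toList.permutations.toFinset := by
    intro τ l hl
    rw [List.mem_toFinset, mem_permutations_toList_univ] at hl ⊢
    exact ⟨hl.1.map τ.injective, fun a => List.mem_map.mpr ⟨τ.symm a, hl.2 _, τ.apply_symm_apply a⟩⟩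
  simp only [qsExp_eq_sum]
  congr 1
  exact Finset.sum_nbij' (List.map σ) (List.map σ.symm) (fun l hl => hmem σ hl)
    (fun l hl => hmem σ.symm hl) (fun l _ => by simp [List.map_map])
    (fun l _ => by simp [List.map_map]) fun l _ => rfl

end Expectation

section Decomposition

open scoped Classical

noncomputable def pivotProb {α : Type*} [Fintype α] (h : α → α → Bool) (w u v : α) : ℝ :=
  qsExp (fun l => if PivotFor h w u v l then 1 else 0)

theorem pivotProb_comm {α : Type*} [Fintype α] {h : α → α → Bool} (w u v : α) :
    pivotProb h w u v = pivotProb h w v u := by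
  simp only [pivotProb, PivotFor.comm_iff (v := v)]

variable [Fintype V] {h : V → V → Bool}

theorem rankBefore_qsort_pair_eq (htour : ∀ a b, a ≠ b → h a b = !h b a) (X : V → V → ℝ)
    {l : List V} (hl : l.Nodup) {u v : V} (huv : u ≠ v) (hu : u ∈ l) (hv : v ∈ l) :
    rankBefore (qsort h l) u v * X v u + rankBefore (qsort h l) v u * X u v =
      (if ({u, v} : Finset V) ∈ directPairs h l then 1 else 0) *
          (hr h u v * X v u + hr h v u * X u v) +
        ∑ w ∈ Finset.univ.filter (fun w => w ≠ u ∧ w ≠ v),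
          (if PivotFor h w u v l then 1 else 0) *
            (hr h u w * hr h w v * X v u + hr h v w * hr h w u * X u v) := by
  rw [rankBefore_qsort_eq_pivotRank htour hl huv hu hv,
    rankBefore_qsort_eq_pivotRank htour hl huv.symm hv hu, pivotRank, pivotRank,
    Finset.pair_comm v u, Finset.filter_congr fun w _ => and_comm (a := w ≠ v)]
  simp only [PivotFor.comm_iff (v := u), add_mul, mul_add, Finset.sum_mul, Finset.sum_add_distrib]
  ring_nf

theorem qsExp_rankBefore_pair_eq (htour : ∀ a b, a ≠ b → h a b = !h b a) (X : V → V → ℝ)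
    {u v : V} (huv : u ≠ v) :
    qsExp (fun l => rankBefore (qsort h l) u v * X v u + rankBefore (qsort h l) v u * X u v) =
      pPair h u v * (hr h u v * X v u + hr h v u * X u v) +
        ∑ w ∈ Finset.univ.filter (fun w => w ≠ u ∧ w ≠ v),
          pivotProb h w u v * (hr h u w * hr h w v * X v u + hr h v w * hr h w u * X u v) := by
  rw [qsExp_congr fun l hl hall => rankBefore_qsort_pair_eq htour X hl huv (hall u) (hall v),
    qsExp_add, qsExp_mul_const, qsExp_sum]
  simp only [qsExp_mul_const, pPair, pivotProb]

theorem pivotProb_swap {a b c : V} (hca : c ≠ a) (hcb : c ≠ b) :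
    pivotProb h b a c = pivotProb h a b c := by
  rw [pivotProb, ← qsExp_comp_map (Equiv.swap a b)]
  exact qsExp_congr fun l hl _ => if_congr (PivotFor.map_swap_iff hl hca hcb) rfl rfl

theorem pTriple_eq_sum_pivotProb {a b c : V} (hab : a ≠ b) (hac : a ≠ c) (hbc : b ≠ c) :
    pTriple h a b c = pivotProb h a b c + pivotProb h b a c + pivotProb h c a b := by
  rw [pivotProb, pivotProb, pivotProb, ← qsExp_add, ← qsExp_add]
  refine qsExp_congr fun l hl _ => ?_
  rw [if_congr (mem_pivotTriples_iff h hab hac hbc l) rfl rfl, ite_or_eq_add, ite_or_eq_add,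
    add_assoc]
  · rintro ⟨hb, hc⟩
    exact hbc (hb.symm.antisymm hl hc.symm)
  · rintro ⟨ha, hb | hc⟩
    exacts [hab (ha.antisymm hl hb), hac (ha.symm.antisymm hl hc)]

theorem pivotProb_eq_pTriple_div_three {a b c : V} (hab : a ≠ b) (hac : a ≠ c) (hbc : b ≠ c) :
    pivotProb h a b c = pTriple h a b c / 3 := by
  have hb : pivotProb h b a c = pivotProb h a b c := pivotProb_swap hac.symm hbc.symm
  have hc : pivotProb h c a b = pivotProb h a b c := by
    rw [pivotProb_comm, pivotProb_swap hab hac, pivotProb_comm, hb]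
  rw [pTriple_eq_sum_pivotProb hab hac hbc, hb, hc]
  ring

end Decomposition

theorem pTriple_swap [Fintype V] (h : V → V → Bool) (a b c : V) :
    pTriple h b a c = pTriple h a b c := by
  rw [pTriple, pTriple, Finset.insert_comm]

theorem pTriple_rotate [Fintype V] (h : V → V → Bool) (a b c : V) :
    pTriple h c a b = pTriple h a b c := by
  rw [pTriple, pTriple, Finset.insert_comm c a, Finset.pair_comm c b]

theorem sum_pairs_sum_others_eq_sum_triples {α M : Type*} [LinearOrder α] [DecidableEq α]
    [Fintype α] [AddCommMonoid M] (G : α → α → α → M) :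
    ∑ p ∈ Finset.univ.filter (fun p : α × α => p.1 < p.2),
        ∑ w ∈ Finset.univ.filter (fun w => w ≠ p.1 ∧ w ≠ p.2), G p.1 p.2 w =
      ∑ t ∈ Finset.univ.filter (fun t : α × α × α => t.1 < t.2.1 ∧ t.2.1 < t.2.2),
        (G t.1 t.2.1 t.2.2 + G t.1 t.2.2 t.2.1 + G t.2.1 t.2.2 t.1) := by
  have hsplit : ∀ u v w : α, (if u < v then (if w ≠ u ∧ w ≠ v then G u v w else 0) else 0) =
      (if u < v ∧ v < w then G u v w else 0) + (if u < w ∧ w < v then G u v w else 0) +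
        (if w < u ∧ u < v then G u v w else 0) :=
    fun u v w => by grind
  simp only [Finset.sum_filter, Fintype.sum_prod_type, Finset.ite_sum_zero, hsplit,
    Finset.sum_add_distrib]
  congr 1
  · congr 1
    exact Finset.sum_congr rfl fun _ _ => Finset.sum_comm
  · rw [eq_comm, Finset.sum_comm]
    exact Finset.sum_congr rfl fun _ _ => Finset.sum_comm

/-- QuickSort decomposition, second part: the expected value of
Σ_{u<v} α[Q_s, X]_{uv} decomposes into direct-comparison and pivot terms. -/
theorem quicksort_decomposition_alpha [Fintype V] [LinearOrder V]
    (h : V → V → Bool) (htour : ∀ a b : V, a ≠ b → h a b = !h b a)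
    (X : V → V → ℝ) :
    qsExp (fun l =>
        ∑ p ∈ Finset.univ.filter (fun p : V × V => p.1 < p.2),
          (rankBefore (qsort h l) p.1 p.2 * X p.2 p.1
            + rankBefore (qsort h l) p.2 p.1 * X p.1 p.2))
      = (∑ p ∈ Finset.univ.filter (fun p : V × V => p.1 < p.2),
          pPair h p.1 p.2 * (hr h p.1 p.2 * X p.2 p.1 + hr h p.2 p.1 * X p.1 p.2))
        + ∑ t ∈ Finset.univ.filter
            (fun t : V × V × V => t.1 < t.2.1 ∧ t.2.1 < t.2.2),
          pTriple h t.1 t.2.1 t.2.2 *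
            ((1 / 3 : ℝ) *
              (hr h t.1 t.2.1 * hr h t.2.1 t.2.2 * X t.2.2 t.1
                + hr h t.2.2 t.2.1 * hr h t.2.1 t.1 * X t.1 t.2.2
                + hr h t.2.1 t.1 * hr h t.1 t.2.2 * X t.2.2 t.2.1
                + hr h t.2.2 t.1 * hr h t.1 t.2.1 * X t.2.1 t.2.2
                + hr h t.1 t.2.2 * hr h t.2.2 t.2.1 * X t.2.1 t.1
                + hr h t.2.1 t.2.2 * hr h t.2.2 t.1 * X t.1 t.2.1)) := by
  rw [qsExp_sum, Finset.sum_congr rfl fun p hp =>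
      qsExp_rankBefore_pair_eq htour X (Finset.mem_filter.mp hp).2.ne,
    Finset.sum_add_distrib, sum_pairs_sum_others_eq_sum_triples fun u v w =>
      pivotProb h w u v * (hr h u w * hr h w v * X v u + hr h v w * hr h w u * X u v)]
  congr 1
  refine Finset.sum_congr rfl fun t ht => ?_
  obtain ⟨hab, hbc⟩ := (Finset.mem_filter.mp ht).2
  rw [pivotProb_eq_pTriple_div_three (hab.trans hbc).ne' hbc.ne' hab.ne,
    pivotProb_eq_pTriple_div_three hab.ne' hbc.ne (hab.trans hbc).ne,
    pivotProb_eq_pTriple_div_three hab.ne (hab.trans hbc).ne hbc.ne,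
    pTriple_rotate, pTriple_swap]
  ring
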